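/- arXiv:0706.3618 — 3 statements merged into one kernel-verified Lean document; each statement's English description precedes it below -/
import Mathlib

section
/- For two unit vectors a, b ∈ ℝ³, the operator norm of the matrix P₋(a)P₊(b) is bounded by a constant times the angle between a and b, where P±(ξ) = (1/2)(I ± ξ·α). Concretely: ‖P₋(a)P₊(b)‖ ≲ ∠(a,b). -/
open Matrix Complex

noncomputable section

def pauli : Fin 3 → Matrix (Fin 2) (Fin 2) ℂ :=
  ![!![0, 1; 1, 0], !![0, -I; I, 0], !![1, 0; 0, -1]]

def diracAlpha (j : Fin 3) : Matrix (Fin 2 ⊕ Fin 2) (Fin 2 ⊕ Fin 2) ℂ :=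
  Matrix.fromBlocks 0 (pauli j) (pauli j) 0

def diracBeta : Matrix (Fin 2 ⊕ Fin 2) (Fin 2 ⊕ Fin 2) ℂ :=
  Matrix.fromBlocks 1 0 0 (-1)

def diracDot (ξ : EuclideanSpace ℝ (Fin 3)) :
    Matrix (Fin 2 ⊕ Fin 2) (Fin 2 ⊕ Fin 2) ℂ :=
  ∑ j : Fin 3, (ξ j : ℂ) • diracAlpha j

def Pplus (ξ : EuclideanSpace ℝ (Fin 3)) :
    Matrix (Fin 2 ⊕ Fin 2) (Fin 2 ⊕ Fin 2) ℂ :=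
  ((1 : ℂ)/2) • (1 + diracDot ξ)

def Pminus (ξ : EuclideanSpace ℝ (Fin 3)) :
    Matrix (Fin 2 ⊕ Fin 2) (Fin 2 ⊕ Fin 2) ℂ :=
  ((1 : ℂ)/2) • (1 - diracDot ξ)

/-! Since `ξ·α` is Hermitian with `(ξ·α)² = ‖ξ‖²`, its operator norm is `‖ξ‖`, and for a unit
vector `a` the two spectral projections satisfy `P₋(a) P₊(a) = 0`. Hence
`P₋(a) P₊(b) = P₋(a) (P₊(b) - P₊(a)) = ½ P₋(a) ((b - a)·α)`, of norm at most `½ ‖b - a‖`,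
and the chord `‖b - a‖` is at most the arc `∠(a, b)`. -/

lemma pauli_conjTranspose (j : Fin 3) : (pauli j)ᴴ = pauli j := by
  fin_cases j <;>
  · ext i k
    fin_cases i <;> fin_cases k <;> simp [pauli]

lemma diracDot_conjTranspose (ξ : EuclideanSpace ℝ (Fin 3)) : (diracDot ξ)ᴴ = diracDot ξ := by
  simp [diracDot, diracAlpha, Matrix.conjTranspose_sum, Matrix.fromBlocks_conjTranspose,
    pauli_conjTranspose]

def pauliDot (ξ : EuclideanSpace ℝ (Fin 3)) : Matrix (Fin 2) (Fin 2) ℂ :=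
  ∑ j, (ξ j : ℂ) • pauli j

lemma diracDot_eq_fromBlocks (ξ : EuclideanSpace ℝ (Fin 3)) :
    diracDot ξ = fromBlocks 0 (pauliDot ξ) (pauliDot ξ) 0 := by
  simp [diracDot, diracAlpha, pauliDot, Fin.sum_univ_three, fromBlocks_smul, fromBlocks_add]

lemma pauliDot_mul_self (ξ : EuclideanSpace ℝ (Fin 3)) :
    pauliDot ξ * pauliDot ξ = ((‖ξ‖ ^ 2 : ℝ) : ℂ) • 1 := by
  rw [EuclideanSpace.real_norm_sq_eq]
  ext i k
  fin_cases i <;> fin_cases k <;>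
    simp [pauliDot, Fin.sum_univ_three, pauli, mul_apply, Fin.sum_univ_two] <;> ring_nf <;>
    simp [I_sq]

lemma diracDot_mul_self (ξ : EuclideanSpace ℝ (Fin 3)) :
    diracDot ξ * diracDot ξ = ((‖ξ‖ ^ 2 : ℝ) : ℂ) • 1 := by
  rw [diracDot_eq_fromBlocks, fromBlocks_multiply, ← fromBlocks_one, fromBlocks_smul]
  simp only [Matrix.mul_zero, Matrix.zero_mul, add_zero, zero_add, pauliDot_mul_self, smul_zero]

lemma diracDot_sub (a b : EuclideanSpace ℝ (Fin 3)) :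
    diracDot (b - a) = diracDot b - diracDot a := by
  simp [diracDot, sub_smul, Finset.sum_sub_distrib]

lemma norm_toEuclideanCLM_diracDot (ξ : EuclideanSpace ℝ (Fin 3)) :
    ‖toEuclideanCLM (𝕜 := ℂ) (diracDot ξ)‖ = ‖ξ‖ := by
  set x := toEuclideanCLM (𝕜 := ℂ) (diracDot ξ)
  have hstar : star x * x = ((‖ξ‖ ^ 2 : ℝ) : ℂ) • 1 := by
    rw [← map_star, ← map_mul, star_eq_conjTranspose, diracDot_conjTranspose, diracDot_mul_self,
      map_smul, map_one]
  have hsq : ‖x‖ * ‖x‖ = ‖ξ‖ * ‖ξ‖ := by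
    rw [← CStarRing.norm_star_mul_self, hstar, norm_smul, norm_one, mul_one, norm_real,
      Real.norm_of_nonneg (by positivity), sq]
  exact (mul_self_inj (norm_nonneg _) (norm_nonneg _)).mp hsq

lemma Pminus_mul_Pplus_self {ξ : EuclideanSpace ℝ (Fin 3)} (hξ : ‖ξ‖ = 1) :
    Pminus ξ * Pplus ξ = 0 := by
  have hfactor : (1 - diracDot ξ) * (1 + diracDot ξ) = 1 - diracDot ξ * diracDot ξ := by
    noncomm_ring
  rw [Pminus, Pplus, smul_mul_smul_comm, hfactor, diracDot_mul_self, hξ]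
  simp

lemma Pplus_sub_Pplus (a b : EuclideanSpace ℝ (Fin 3)) :
    Pplus b - Pplus a = ((1 : ℂ) / 2) • diracDot (b - a) := by
  rw [Pplus, Pplus, ← smul_sub, add_sub_add_left_eq_sub, diracDot_sub]

lemma norm_toEuclideanCLM_Pminus_le (ξ : EuclideanSpace ℝ (Fin 3)) :
    ‖toEuclideanCLM (𝕜 := ℂ) (Pminus ξ)‖ ≤ (1 + ‖ξ‖) / 2 := by
  have hsub := norm_sub_le 1 (toEuclideanCLM (𝕜 := ℂ) (diracDot ξ))
  rw [norm_one, norm_toEuclideanCLM_diracDot] at hsub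
  rw [Pminus, map_smul, map_sub, map_one, norm_smul, norm_div, norm_one, RCLike.norm_ofNat]
  linarith

lemma norm_toEuclideanCLM_Pplus_sub_Pplus (a b : EuclideanSpace ℝ (Fin 3)) :
    ‖toEuclideanCLM (𝕜 := ℂ) (Pplus b - Pplus a)‖ = ‖b - a‖ / 2 := by
  rw [Pplus_sub_Pplus, map_smul, norm_smul, norm_toEuclideanCLM_diracDot]
  norm_num
  ring

theorem InnerProductGeometry.norm_sub_le_angle {V : Type*} [NormedAddCommGroup V]
    [InnerProductSpace ℝ V] {x y : V} (hx : ‖x‖ = 1) (hy : ‖y‖ = 1) :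
    ‖x - y‖ ≤ angle x y := by
  have hcos := norm_sub_sq_eq_norm_sq_add_norm_sq_sub_two_mul_norm_mul_norm_mul_cos_angle x y
  rw [hx, hy] at hcos
  have := Real.one_sub_sq_div_two_le_cos (x := angle x y)
  nlinarith [angle_nonneg x y, norm_nonneg (x - y)]

theorem Pminus_mul_Pplus_opNorm_le_angle :
    ∃ C : ℝ, 0 < C ∧ ∀ a b : EuclideanSpace ℝ (Fin 3), ‖a‖ = 1 → ‖b‖ = 1 →
      ‖Matrix.toEuclideanCLM (𝕜 := ℂ) (Pminus a * Pplus b)‖ ≤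
        C * InnerProductGeometry.angle a b := by
  refine ⟨1 / 2, by norm_num, fun a b ha hb => ?_⟩
  have hsplit : Pminus a * Pplus b = Pminus a * (Pplus b - Pplus a) := by
    rw [mul_sub, Pminus_mul_Pplus_self ha, sub_zero]
  have hPminus : ‖toEuclideanCLM (𝕜 := ℂ) (Pminus a)‖ ≤ 1 := by
    simpa [ha] using norm_toEuclideanCLM_Pminus_le a
  calc ‖toEuclideanCLM (𝕜 := ℂ) (Pminus a * Pplus b)‖
      ≤ ‖toEuclideanCLM (𝕜 := ℂ) (Pminus a)‖ * ‖toEuclideanCLM (𝕜 := ℂ) (Pplus b - Pplus a)‖ := by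
        rw [hsplit, map_mul]
        exact norm_mul_le _ _
    _ ≤ 1 * (‖b - a‖ / 2) := by
        rw [norm_toEuclideanCLM_Pplus_sub_Pplus]
        gcongr
    _ ≤ 1 / 2 * InnerProductGeometry.angle a b := by
        rw [InnerProductGeometry.angle_comm]
        linarith [InnerProductGeometry.norm_sub_le_angle hb ha]
end
end

section
/- For nonzero vectors η, ξ ∈ ℝ³ with η ≠ ξ, letting θ₋ = ∠(η, −(η−ξ)) be the angle between η and ξ−η, and κ₋ = |η| + |η−ξ| − |ξ|, one has θ₋² ≥ c·κ₋/min(|η|, |η−ξ|) and θ₋² ≤ C·κ₋/min(|η|, |η−ξ|) for universal constants c, C > 0; equivalently θ₋² ≈ (|η|+|η−ξ|)κ₋/(|η||η−ξ|). -/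
open InnerProductGeometry

private lemma aux_key (r s t θ : ℝ) (hr : 0 < r) (hs : 0 < s) (ht : 0 < t)
    (htri : t ≤ r + s)
    (hpyth : t ^ 2 = r ^ 2 + s ^ 2 + 2 * (r * s * Real.cos θ))
    (hθ0 : 0 ≤ θ) (hθπ : θ ≤ Real.pi) :
    1 * ((r + s - t) / min r s) ≤ θ ^ 2 ∧
      θ ^ 2 ≤ Real.pi ^ 2 * ((r + s - t) / min r s) := by
  have hπ : 0 < Real.pi := Real.pi_pos
  have h1 : 1 - Real.cos θ ≤ θ ^ 2 / 2 := by
    have := Real.one_sub_sq_div_two_le_cos (x := θ); linarith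
  have h2 : 2 * θ ^ 2 ≤ Real.pi ^ 2 * (1 - Real.cos θ) := by
    have := Real.cos_le_one_sub_mul_cos_sq (x := θ) (by rwa [abs_of_nonneg hθ0])
    have hπ2 : (0:ℝ) < Real.pi ^ 2 := by positivity
    have h3 : 2 / Real.pi ^ 2 * θ ^ 2 * Real.pi ^ 2 = 2 * θ ^ 2 := by
      field_simp
    nlinarith [mul_le_mul_of_nonneg_right this hπ2.le, h3]
  have hkey : (r + s - t) * (r + s + t) = 2 * (r * s) * (1 - Real.cos θ) := by
    ring_nf; nlinarith [hpyth]
  have hκ : 0 ≤ r + s - t := by linarith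
  have hkey2 : Real.pi ^ 2 * ((r + s - t) * (r + s + t)) =
      Real.pi ^ 2 * (2 * (r * s) * (1 - Real.cos θ)) := by rw [hkey]
  have hπ2 : (0:ℝ) < Real.pi ^ 2 := by positivity
  rcases min_cases r s with ⟨hm, hle⟩ | ⟨hm, hle⟩ <;> rw [hm] <;> constructor
  · rw [one_mul, div_le_iff₀ hr]
    nlinarith [hkey, h1, mul_le_mul_of_nonneg_left h1 (by positivity : (0:ℝ) ≤ 2 * (r*s))]
  · rw [← mul_div_assoc, le_div_iff₀ hr]
    nlinarith [hkey2, mul_le_mul_of_nonneg_left h2 (mul_nonneg hr.le hs.le),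
      mul_nonneg (mul_nonneg hπ2.le hκ) (show (0:ℝ) ≤ 4 * s - (r + s + t) by linarith), hs]
  · rw [one_mul, div_le_iff₀ hs]
    nlinarith [hkey, h1, mul_le_mul_of_nonneg_left h1 (by positivity : (0:ℝ) ≤ 2 * (r*s))]
  · rw [← mul_div_assoc, le_div_iff₀ hs]
    nlinarith [hkey2, mul_le_mul_of_nonneg_left h2 (mul_nonneg hr.le hs.le),
      mul_nonneg (mul_nonneg hπ2.le hκ) (show (0:ℝ) ≤ 4 * r - (r + s + t) by linarith), hr]

theorem theta_minus_sq_comparable :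
    ∃ c C : ℝ, 0 < c ∧ 0 < C ∧
      ∀ η ξ : EuclideanSpace ℝ (Fin 3), η ≠ 0 → ξ ≠ 0 → η ≠ ξ →
        c * ((‖η‖ + ‖η - ξ‖ - ‖ξ‖) / min ‖η‖ ‖η - ξ‖) ≤ (angle η (ξ - η)) ^ 2 ∧
        (angle η (ξ - η)) ^ 2 ≤ C * ((‖η‖ + ‖η - ξ‖ - ‖ξ‖) / min ‖η‖ ‖η - ξ‖) := by
  refine ⟨1, Real.pi ^ 2, one_pos, by positivity, fun η ξ hη hξ hne => ?_⟩
  have hb : ξ - η ≠ 0 := sub_ne_zero.mpr (Ne.symm hne)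
  have hr : 0 < ‖η‖ := norm_pos_iff.mpr hη
  have hs : 0 < ‖ξ - η‖ := norm_pos_iff.mpr hb
  have ht : 0 < ‖ξ‖ := norm_pos_iff.mpr hξ
  have hrev : ‖η - ξ‖ = ‖ξ - η‖ := norm_sub_rev _ _
  have hsum : η + (ξ - η) = ξ := by abel
  have htri : ‖ξ‖ ≤ ‖η‖ + ‖ξ - η‖ := by
    calc ‖ξ‖ = ‖η + (ξ - η)‖ := by rw [hsum]
    _ ≤ _ := norm_add_le _ _
  have hpyth : ‖ξ‖ ^ 2 = ‖η‖ ^ 2 + ‖ξ - η‖ ^ 2 +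
      2 * (‖η‖ * ‖ξ - η‖ * Real.cos (angle η (ξ - η))) := by
    have h := @norm_add_sq_real (EuclideanSpace ℝ (Fin 3)) _ _ η (ξ - η)
    rw [hsum] at h
    rw [h, ← cos_angle_mul_norm_mul_norm]
    ring
  have := aux_key ‖η‖ ‖ξ - η‖ ‖ξ‖ (angle η (ξ - η)) hr hs ht htri hpyth
    (angle_nonneg _ _) (angle_le_pi _ _)
  rw [hrev]
  exact this
end

section
/- For nonzero vectors η, ξ ∈ ℝ³ with η ≠ ξ and ξ ≠ 0, letting θ₊ = ∠(η, η−ξ) and κ₊ = |ξ| − ||η| − |η−ξ||, one has θ₊² ≈ |ξ|κ₊/(|η||η−ξ|), i.e., there exist universal constants c, C > 0 with c·|ξ|κ₊/(|η||η−ξ|) ≤ θ₊² ≤ C·|ξ|κ₊/(|η||η−ξ|). -/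
open InnerProductGeometry

lemma one_sub_cos_bounds {θ : ℝ} (h0 : 0 ≤ θ) (hπ : θ ≤ Real.pi) :
    2 * θ ^ 2 ≤ Real.pi ^ 2 * (1 - Real.cos θ) ∧ 2 * (1 - Real.cos θ) ≤ θ ^ 2 := by
  have hpi := Real.pi_pos
  have hs : Real.sin (θ / 2) ^ 2 = 1 / 2 - Real.cos (2 * (θ / 2)) / 2 :=
    Real.sin_sq_eq_half_sub (θ / 2)
  rw [show 2 * (θ / 2) = θ by ring] at hs
  have hle : Real.sin (θ / 2) ≤ θ / 2 := Real.sin_le (by linarith)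
  have hge : 2 / Real.pi * (θ / 2) ≤ Real.sin (θ / 2) :=
    Real.mul_le_sin (by linarith) (by linarith)
  rw [show 2 / Real.pi * (θ / 2) = θ / Real.pi by ring] at hge
  have hge' : θ ≤ Real.pi * Real.sin (θ / 2) := by
    have := (div_le_iff₀' hpi).mp hge
    linarith
  have hsn : 0 ≤ Real.sin (θ / 2) := by
    have := div_nonneg h0 hpi.le
    linarith
  constructor
  · nlinarith [sq_nonneg (Real.pi * Real.sin (θ / 2) - θ)]
  · nlinarith [sq_nonneg (θ / 2 - Real.sin (θ / 2))]

theorem theta_plus_sq_comparable :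
    ∃ c C : ℝ, 0 < c ∧ 0 < C ∧
      ∀ η ξ : EuclideanSpace ℝ (Fin 3), η ≠ 0 → ξ ≠ 0 → η ≠ ξ →
        c * (‖ξ‖ * (‖ξ‖ - |‖η‖ - ‖η - ξ‖|) / (‖η‖ * ‖η - ξ‖)) ≤ (angle η (η - ξ)) ^ 2 ∧
        (angle η (η - ξ)) ^ 2 ≤ C * (‖ξ‖ * (‖ξ‖ - |‖η‖ - ‖η - ξ‖|) / (‖η‖ * ‖η - ξ‖)) := by
  refine ⟨1, Real.pi ^ 2 / 2, one_pos, by positivity, ?_⟩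
  intro η ξ hη hξ hne
  set θ := angle η (η - ξ) with hθ
  have hA : (0:ℝ) < ‖η‖ := norm_pos_iff.2 hη
  have hB : (0:ℝ) < ‖η - ξ‖ := norm_pos_iff.2 (sub_ne_zero.2 hne)
  have hC : (0:ℝ) < ‖ξ‖ := norm_pos_iff.2 hξ
  -- law of cosines
  have hlaw : ‖η - (η - ξ)‖ * ‖η - (η - ξ)‖ =
      ‖η‖ * ‖η‖ + ‖η - ξ‖ * ‖η - ξ‖ - 2 * ‖η‖ * ‖η - ξ‖ * Real.cos θ :=
    norm_sub_sq_eq_norm_sq_add_norm_sq_sub_two_mul_norm_mul_norm_mul_cos_angle η (η - ξ)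
  rw [show η - (η - ξ) = ξ by abel] at hlaw
  -- triangle inequality
  have htri : |‖η‖ - ‖η - ξ‖| ≤ ‖ξ‖ := by
    have := abs_norm_sub_norm_le η (η - ξ)
    rwa [show η - (η - ξ) = ξ by abel] at this
  set κ := ‖ξ‖ - |‖η‖ - ‖η - ξ‖| with hκ
  have hκ0 : 0 ≤ κ := by simp [hκ]; linarith
  have habs : |‖η‖ - ‖η - ξ‖| ^ 2 = (‖η‖ - ‖η - ξ‖) ^ 2 := sq_abs _
  have hkey : 2 * ‖η‖ * ‖η - ξ‖ * (1 - Real.cos θ) = κ * (‖ξ‖ + |‖η‖ - ‖η - ξ‖|) := by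
    have h : κ * (‖ξ‖ + |‖η‖ - ‖η - ξ‖|) = ‖ξ‖ ^ 2 - |‖η‖ - ‖η - ξ‖| ^ 2 := by
      rw [hκ]; ring
    rw [h, habs]
    nlinarith [hlaw]
  have h1 : κ * ‖ξ‖ ≤ 2 * ‖η‖ * ‖η - ξ‖ * (1 - Real.cos θ) := by
    rw [hkey]
    nlinarith [abs_nonneg (‖η‖ - ‖η - ξ‖)]
  have h2 : 2 * ‖η‖ * ‖η - ξ‖ * (1 - Real.cos θ) ≤ 2 * (κ * ‖ξ‖) := by
    rw [hkey]
    nlinarith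
  have hθ0 : 0 ≤ θ := angle_nonneg _ _
  have hθπ : θ ≤ Real.pi := angle_le_pi _ _
  obtain ⟨hc1, hc2⟩ := one_sub_cos_bounds hθ0 hθπ
  clear_value θ κ
  have hAB : (0:ℝ) < ‖η‖ * ‖η - ξ‖ := mul_pos hA hB
  constructor
  · rw [one_mul, div_le_iff₀ hAB]
    nlinarith [mul_le_mul_of_nonneg_left hc2 hAB.le]
  · rw [show Real.pi ^ 2 / 2 * (‖ξ‖ * κ / (‖η‖ * ‖η - ξ‖)) =
        Real.pi ^ 2 / 2 * (‖ξ‖ * κ) / (‖η‖ * ‖η - ξ‖) by ring, le_div_iff₀ hAB]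
    have e1 := mul_le_mul_of_nonneg_left hc1 hAB.le
    have e2 := mul_le_mul_of_nonneg_left h2 (sq_nonneg Real.pi)
    nlinarith [e1, e2]
end
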